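/- arXiv:1703.09280 — 2 statements merged into one kernel-verified Lean document; each statement's English description precedes it below -/
import Mathlib

section
/- Let {β_i} be a positive sequence with ∑_{i=0}^∞ β_i = ∞ and ∑_{i=0}^∞ β_i² < ∞, and run the Radial Subgradient Method with step sizes α_i = −z_i·β_i. If γ_{z_i}(x̃_{i+1}) > 0 at every iteration i (so the algorithm never terminates reporting an unbounded objective), then lim_{k→∞} min_{i ≤ k} f(x_i) = f*. -/
/-!
Every iterate lies on the boundary `γ_{z i}(x i) = 1` of its level set, so `f (x i) ≤ z i` by lower
semicontinuity. Since `f ≤ f 0 / 2` on a ball around `0`, the subgradients `ζ i` stay bounded as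
long as the levels stay above some `q`. Divided by the level, the update is a plain subgradient
step `x (i+1) / z (i+1) = x i / z i + β i • ζ i`, and for `f y ≤ w < q` the squared distance to
`y / w` drops by `2 β i (1/w - 1/z i) ≥ 2 β i (1/w - 1/q)` up to `β i² ‖ζ i‖²`. Summing, `∑ β i`
would converge; hence `inf z i ≤ f y` for every `y`.
-/

open Filter

/-- The perspective function `f^p(x, γ) = γ · f(x/γ)` of `f`, for `γ > 0`. -/
noncomputable def perspective {n : ℕ} (f : EuclideanSpace ℝ (Fin n) → EReal)
    (x : EuclideanSpace ℝ (Fin n)) (γ : ℝ) : EReal :=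
  (γ : EReal) * f (γ⁻¹ • x)

/-- The radial reformulation of `f` of level `z`:
`γ_z(x) = inf { γ > 0 | f^p(x, γ) ≤ z }`. -/
noncomputable def radial {n : ℕ} (f : EuclideanSpace ℝ (Fin n) → EReal)
    (z : ℝ) (x : EuclideanSpace ℝ (Fin n)) : ℝ :=
  sInf {γ : ℝ | 0 < γ ∧ perspective f x γ ≤ (z : EReal)}

/-- `f : ℝⁿ → ℝ ∪ {∞}` is lower-semicontinuous and convex, never `-∞`, with
`0` in the interior of its effective domain and `f(0) < 0`. -/
structure GoodFun {n : ℕ} (f : EuclideanSpace ℝ (Fin n) → EReal) : Prop where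
  proper : ∀ x, f x ≠ ⊥
  lsc : LowerSemicontinuous f
  convexEpi : Convex ℝ {p : EuclideanSpace ℝ (Fin n) × ℝ | f p.1 ≤ (p.2 : EReal)}
  zero_mem : (0 : EuclideanSpace ℝ (Fin n)) ∈ interior {x | f x ≠ ⊤}
  neg_at_zero : f 0 < 0

/-- `ζ` is a subgradient of `g` at `x`. -/
def IsSubgradient {n : ℕ} (g : EuclideanSpace ℝ (Fin n) → ℝ)
    (x ζ : EuclideanSpace ℝ (Fin n)) : Prop :=
  ∀ y, g x + (inner ℝ ζ (y - x) : ℝ) ≤ g y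

/-- The Radial Subgradient Method with positive step sizes `α`:
`x 0 = 0`, `z 0 = f 0`; at iteration `i`, `ζ i` is a subgradient of `γ_{z i}` at `x i`,
`xt (i+1) = x i - α i • ζ i`, and whenever `γ_{z i}(xt (i+1)) > 0`,
`(x (i+1), z (i+1)) = (xt (i+1), z i) / γ_{z i}(xt (i+1))`. -/
structure RSM {n : ℕ} (f : EuclideanSpace ℝ (Fin n) → EReal) (α : ℕ → ℝ)
    (x xt : ℕ → EuclideanSpace ℝ (Fin n)) (z : ℕ → ℝ)
    (ζ : ℕ → EuclideanSpace ℝ (Fin n)) : Prop where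
  step_pos : ∀ i, 0 < α i
  init_x : x 0 = 0
  init_z : f 0 = ((z 0 : ℝ) : EReal)
  subgrad : ∀ i, IsSubgradient (radial f (z i)) (x i) (ζ i)
  tilde : ∀ i, xt (i + 1) = x i - α i • ζ i
  update_x : ∀ i, 0 < radial f (z i) (xt (i + 1)) →
    x (i + 1) = (radial f (z i) (xt (i + 1)))⁻¹ • xt (i + 1)
  update_z : ∀ i, 0 < radial f (z i) (xt (i + 1)) →
    z (i + 1) = z i / radial f (z i) (xt (i + 1))

open Set Topology Pointwise

section Radial

variable {n : ℕ} {f : EuclideanSpace ℝ (Fin n) → EReal} {x u : EuclideanSpace ℝ (Fin n)}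
  {z γ : ℝ}

lemma EReal.coe_mul_le_coe_iff_le_coe_div (hγ : 0 < γ) {X : EReal} :
    (γ : EReal) * X ≤ z ↔ X ≤ ((z / γ : ℝ) : EReal) := by
  rw [EReal.coe_div, EReal.le_div_iff_mul_le (by exact_mod_cast hγ) (EReal.coe_ne_top γ),
    mul_comm]

lemma perspective_le_iff (hγ : 0 < γ) :
    perspective f x γ ≤ z ↔ f (γ⁻¹ • x) ≤ ((z / γ : ℝ) : EReal) :=
  EReal.coe_mul_le_coe_iff_le_coe_div hγ

lemma radial_le (hγ : 0 < γ) (h : perspective f x γ ≤ z) : radial f z x ≤ γ :=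
  csInf_le ⟨0, fun _ hγ' => hγ'.1.le⟩ ⟨hγ, h⟩

lemma radial_smul_le (hγ : 0 < γ) (h : f u ≤ ((z / γ : ℝ) : EReal)) :
    radial f z (γ • u) ≤ γ :=
  radial_le hγ <| (perspective_le_iff hγ).2 (by rwa [inv_smul_smul₀ hγ.ne'])

lemma radial_zero_of_apply_zero (hz : z < 0) (h0 : f 0 = z) : radial f z 0 = 1 := by
  have : {γ : ℝ | 0 < γ ∧ perspective f 0 γ ≤ z} = Ici 1 := by
    ext γ
    simp only [perspective, smul_zero, h0, ← EReal.coe_mul, EReal.coe_le_coe_iff, mem_ofPred_eq,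
      mem_Ici]
    constructor
    · rintro ⟨hγ, h⟩
      nlinarith
    · intro hγ
      exact ⟨by linarith, by nlinarith⟩
  rw [radial, this, csInf_Ici]

lemma radial_div_inv_smul {c : ℝ} (hc : 0 < c) (z : ℝ) (x : EuclideanSpace ℝ (Fin n)) :
    radial f (z / c) (c⁻¹ • x) = c⁻¹ * radial f z x := by
  have : {γ : ℝ | 0 < γ ∧ perspective f (c⁻¹ • x) γ ≤ ((z / c : ℝ) : EReal)}
      = c⁻¹ • {γ : ℝ | 0 < γ ∧ perspective f x γ ≤ z} := by
    ext γ
    rw [mem_smul_set_iff_inv_smul_mem₀ (inv_ne_zero hc.ne'), inv_inv, smul_eq_mul]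
    simp only [mem_ofPred_eq, mul_pos_iff_of_pos_left hc]
    refine and_congr_right fun hγ => ?_
    rw [perspective_le_iff hγ, perspective_le_iff (mul_pos hc hγ), mul_inv, mul_comm c⁻¹,
      mul_smul, div_div]
  rw [radial, radial, this, Real.sInf_smul_of_nonneg (inv_nonneg.2 hc.le), smul_eq_mul]

lemma perspective_radial_le (hf : LowerSemicontinuous f) (hx : 0 < radial f z x) :
    perspective f x (radial f z x) ≤ z := by
  set S := {γ : ℝ | 0 < γ ∧ perspective f x γ ≤ z}
  have hS : S.Nonempty := by
    by_contra h
    rw [not_nonempty_iff_eq_empty] at h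
    simp [radial, S, h] at hx
  set g : ℝ → EuclideanSpace ℝ (Fin n) × EReal := fun γ => (γ⁻¹ • x, ((z / γ : ℝ) : EReal))
  have hg : ContinuousAt g (radial f z x) := by
    refine ((continuousAt_inv₀ hx.ne').smul continuousAt_const).prodMk ?_
    exact EReal.continuous_coe_iff.2 continuous_id |>.continuousAt.comp
      (continuousAt_const.div continuousAt_id hx.ne')
  have hgS : g '' S ⊆ {p | f p.1 ≤ p.2} := by
    rintro _ ⟨γ, ⟨hγ, h⟩, rfl⟩
    exact (perspective_le_iff hγ).1 h
  have := hf.isClosed_epigraph.closure_subset_iff.2 hgS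
    (hg.continuousWithinAt.mem_closure_image (csInf_mem_closure hS ⟨0, fun _ h => h.1.le⟩))
  exact (perspective_le_iff hx).2 this

end Radial

section ConvexEpigraph

variable {E : Type*} [NormedAddCommGroup E] [NormedSpace ℝ E] {f : E → EReal}

lemma convexOn_toReal_of_convex_epigraph (hbot : ∀ x, f x ≠ ⊥)
    (hf : Convex ℝ {p : E × ℝ | f p.1 ≤ p.2}) :
    ConvexOn ℝ {x | f x ≠ ⊤} (fun x => (f x).toReal) := by
  rw [convexOn_iff_convex_epigraph]
  convert hf using 1
  ext p
  change f p.1 ≠ ⊤ ∧ _ ↔ f p.1 ≤ p.2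
  constructor
  · rintro ⟨htop, h⟩
    rw [← EReal.coe_toReal htop (hbot _)]
    exact_mod_cast h
  · intro h
    have htop : f p.1 ≠ ⊤ := ne_top_of_le_ne_top (EReal.coe_ne_top _) h
    exact ⟨htop, by simpa using EReal.toReal_le_toReal h (hbot _) (EReal.coe_ne_top _)⟩

lemma eventually_lt_of_convex_epigraph [FiniteDimensional ℝ E] (hbot : ∀ x, f x ≠ ⊥)
    (hf : Convex ℝ {p : E × ℝ | f p.1 ≤ p.2}) {x₀ : E} (hx₀ : x₀ ∈ interior {x | f x ≠ ⊤})
    {c : ℝ} (hc : f x₀ < c) : ∀ᶠ x in 𝓝 x₀, f x < c := by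
  have hdom : ∀ᶠ x in 𝓝 x₀, f x ≠ ⊤ := mem_interior_iff_mem_nhds.1 hx₀
  have hcont : ContinuousAt (fun x => (f x).toReal) x₀ :=
    (convexOn_toReal_of_convex_epigraph hbot hf).continuousOn_interior.continuousAt
      (isOpen_interior.mem_nhds hx₀)
  have hlt : (f x₀).toReal < c := by
    rwa [← EReal.coe_lt_coe_iff, EReal.coe_toReal hdom.self_of_nhds (hbot _)]
  filter_upwards [hdom, hcont.eventually_lt continuousAt_const hlt] with x htop hx
  rwa [← EReal.coe_toReal htop (hbot x), EReal.coe_lt_coe_iff]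

end ConvexEpigraph

section Sequences

open Finset

lemma tendsto_inf'_range_succ_atTop {α : Type*} [CompleteLinearOrder α] [TopologicalSpace α]
    [OrderTopology α] (a : ℕ → α) :
    Tendsto (fun k => (range (k + 1)).inf' nonempty_range_add_one a) atTop (𝓝 (⨅ i, a i)) := by
  have hanti : Antitone (fun k => (range (k + 1)).inf' nonempty_range_add_one a) :=
    fun k l hkl => inf'_mono a (range_subset_range.2 (by omega)) nonempty_range_add_one
  convert tendsto_atTop_iInf hanti using 2
  refine le_antisymm (le_iInf fun k => le_inf' _ _ fun i _ => iInf_le a i) (le_iInf fun i => ?_)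
  exact iInf_le_of_le i (inf'_le a (self_mem_range_succ i))

lemma not_tendsto_sum_range_of_le_sub_add {Q β b : ℕ → ℝ} {ε : ℝ} (hε : 0 < ε)
    (hQ : ∀ i, 0 ≤ Q i) (hb : Summable b) (hstep : ∀ i, Q (i + 1) ≤ Q i - ε * β i + b i) :
    ¬ Tendsto (fun k => ∑ i ∈ range k, β i) atTop atTop := by
  intro hβ
  obtain ⟨C, hC⟩ := hb.hasSum.tendsto_sum_nat.bddAbove_range
  have htel : ∀ k, Q k + ε * ∑ i ∈ range k, β i ≤ Q 0 + ∑ i ∈ range k, b i := by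
    intro k
    induction k with
    | zero => simp
    | succ k ih =>
      rw [sum_range_succ, sum_range_succ, mul_add]
      linarith [hstep k]
  obtain ⟨k, hk⟩ := ((hβ.const_mul_atTop hε).eventually_gt_atTop (Q 0 + C)).exists
  linarith [htel k, hQ k, hC ⟨k, rfl⟩]

end Sequences

lemma norm_le_inv_of_forall_inner_le {E : Type*} [NormedAddCommGroup E] [InnerProductSpace ℝ E]
    {ζ : E} {ρ : ℝ} (hρ : 0 < ρ) (h : ∀ u, ‖u‖ ≤ ρ → inner ℝ ζ u ≤ 1) : ‖ζ‖ ≤ ρ⁻¹ := by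
  rcases eq_or_ne ζ 0 with rfl | hζ
  · simp [hρ.le]
  have hζ' : 0 < ‖ζ‖ := norm_pos_iff.2 hζ
  have := h ((ρ / ‖ζ‖) • ζ) (by rw [norm_smul, Real.norm_of_nonneg (by positivity),
    div_mul_cancel₀ _ hζ'.ne'])
  rw [real_inner_smul_right, real_inner_self_eq_norm_sq] at this
  rw [le_inv_comm₀ hζ' hρ, inv_eq_one_div, le_div_iff₀ hζ']
  calc ρ * ‖ζ‖ = ρ / ‖ζ‖ * ‖ζ‖ ^ 2 := by field_simp
    _ ≤ 1 := this

namespace RSM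

variable {n : ℕ} {f : EuclideanSpace ℝ (Fin n) → EReal} {α : ℕ → ℝ}
  {x xt : ℕ → EuclideanSpace ℝ (Fin n)} {z : ℕ → ℝ} {ζ : ℕ → EuclideanSpace ℝ (Fin n)}

lemma level_zero_neg (hrsm : RSM f α x xt z ζ) (hf0 : f 0 < 0) : z 0 < 0 := by
  exact_mod_cast hrsm.init_z ▸ hf0

lemma level_neg (hrsm : RSM f α x xt z ζ) (hz0 : z 0 < 0)
    (hpos : ∀ i, 0 < radial f (z i) (xt (i + 1))) (i : ℕ) : z i < 0 := by
  induction i with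
  | zero => exact hz0
  | succ i ih => rw [hrsm.update_z i (hpos i)]; exact div_neg_of_neg_of_pos ih (hpos i)

lemma radial_eq_one (hrsm : RSM f α x xt z ζ) (hz0 : z 0 < 0)
    (hpos : ∀ i, 0 < radial f (z i) (xt (i + 1))) (i : ℕ) : radial f (z i) (x i) = 1 := by
  induction i with
  | zero => rw [hrsm.init_x]; exact radial_zero_of_apply_zero hz0 hrsm.init_z
  | succ i _ =>
    rw [hrsm.update_x i (hpos i), hrsm.update_z i (hpos i), radial_div_inv_smul (hpos i)]
    exact inv_mul_cancel₀ (hpos i).ne'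

lemma apply_le_level (hrsm : RSM f α x xt z ζ) (hf : LowerSemicontinuous f) (hz0 : z 0 < 0)
    (hpos : ∀ i, 0 < radial f (z i) (xt (i + 1))) (i : ℕ) : f (x i) ≤ z i := by
  have h := perspective_radial_le (z := z i) (x := x i) hf
    (by rw [hrsm.radial_eq_one hz0 hpos]; exact one_pos)
  rw [hrsm.radial_eq_one hz0 hpos, perspective_le_iff one_pos] at h
  simpa using h

lemma inner_sub_le (hrsm : RSM f α x xt z ζ) (hz0 : z 0 < 0)
    (hpos : ∀ i, 0 < radial f (z i) (xt (i + 1))) (i : ℕ) {p : EuclideanSpace ℝ (Fin n)} {r : ℝ}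
    (hp : radial f (z i) p ≤ r) : inner ℝ (ζ i) (p - x i) ≤ r - 1 := by
  linarith [hrsm.subgrad i p, hrsm.radial_eq_one hz0 hpos i]

lemma norm_subgrad_le (hrsm : RSM f α x xt z ζ) (hf : LowerSemicontinuous f) (hz0 : z 0 < 0)
    (hpos : ∀ i, 0 < radial f (z i) (xt (i + 1))) {ρ c q : ℝ} (hρ : 0 < ρ) (hc : c < 0)
    (hball : ∀ u, ‖u‖ ≤ ρ → f u ≤ c) (i : ℕ) (hq : q ≤ z i) : ‖ζ i‖ ≤ ρ⁻¹ := by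
  have hzi := hrsm.level_neg hz0 hpos i
  -- `q / c` scales the ball of radius `ρ` into the sublevel set `{γ_{z i} ≤ q / c}`.
  have hΓ : 0 < q / c := div_pos_of_neg_of_neg (hq.trans_lt hzi) hc
  have hx : inner ℝ (ζ i) (x i) ≤ 1 := by
    have h := hrsm.inner_sub_le hz0 hpos i (radial_smul_le two_pos
      ((hrsm.apply_le_level hf hz0 hpos i).trans (by exact_mod_cast (by linarith : z i ≤ z i / 2))))
    rw [two_smul, add_sub_cancel_right] at h
    linarith
  refine norm_le_inv_of_forall_inner_le hρ fun u hu => ?_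
  have hzc : c ≤ z i / (q / c) := by
    rw [div_div_eq_mul_div, le_div_iff_of_neg (hq.trans_lt hzi)]
    nlinarith
  have h := hrsm.inner_sub_le hz0 hpos i
    (radial_smul_le hΓ ((hball u hu).trans (by exact_mod_cast hzc)))
  rw [inner_sub_right, real_inner_smul_right] at h
  nlinarith

lemma inv_smul_succ (hrsm : RSM f α x xt z ζ) (hpos : ∀ i, 0 < radial f (z i) (xt (i + 1)))
    (i : ℕ) : (z (i + 1))⁻¹ • x (i + 1) = (z i)⁻¹ • xt (i + 1) := by
  rw [hrsm.update_x i (hpos i), hrsm.update_z i (hpos i), smul_smul, inv_div, div_eq_mul_inv,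
    mul_right_comm, mul_inv_cancel₀ (hpos i).ne', one_mul]

lemma norm_inv_smul_sub_sq_succ_le (hrsm : RSM f α x xt z ζ) (hz0 : z 0 < 0)
    (hpos : ∀ i, 0 < radial f (z i) (xt (i + 1))) {β : ℕ → ℝ} (hα : ∀ i, α i = -z i * β i)
    {y : EuclideanSpace ℝ (Fin n)} {w : ℝ} (hw : w < 0) (hy : f y ≤ w) (i : ℕ) (hβ : 0 ≤ β i) :
    ‖(z (i + 1))⁻¹ • x (i + 1) - w⁻¹ • y‖ ^ 2
      ≤ ‖(z i)⁻¹ • x i - w⁻¹ • y‖ ^ 2 - 2 * β i * (w⁻¹ - (z i)⁻¹) + β i ^ 2 * ‖ζ i‖ ^ 2 := by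
  have hzi := hrsm.level_neg hz0 hpos i
  have hzi0 : z i ≠ 0 := hzi.ne
  have hγ : 0 < z i / w := div_pos_of_neg_of_neg hzi hw
  have hstep : (z (i + 1))⁻¹ • x (i + 1) - w⁻¹ • y = ((z i)⁻¹ • x i - w⁻¹ • y) + β i • ζ i := by
    rw [hrsm.inv_smul_succ hpos, hrsm.tilde, hα]
    match_scalars <;> field_simp
  have hinner : inner ℝ ((z i)⁻¹ • x i - w⁻¹ • y) (ζ i) ≤ (z i)⁻¹ - w⁻¹ := by
    have h := hrsm.inner_sub_le hz0 hpos i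
      (radial_smul_le hγ (by rwa [div_div_cancel₀ hzi0]))
    have hxy : (z i)⁻¹ • x i - w⁻¹ • y = -(z i)⁻¹ • ((z i / w) • y - x i) := by
      match_scalars <;> field_simp
    rw [hxy, real_inner_smul_left, real_inner_comm]
    have : (z i)⁻¹ * (z i / w) = w⁻¹ := by field_simp
    nlinarith [inv_lt_zero.2 hzi]
  rw [hstep, norm_add_sq_real, real_inner_smul_right, norm_smul, mul_pow, Real.norm_eq_abs,
    sq_abs]
  nlinarith

lemma iInf_level_le (hrsm : RSM f α x xt z ζ) (hf : GoodFun f) {β : ℕ → ℝ}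
    (hβpos : ∀ i, 0 < β i) (hβdiv : Tendsto (fun k => ∑ i ∈ Finset.range k, β i) atTop atTop)
    (hβsq : Summable (fun i => β i ^ 2)) (hα : ∀ i, α i = -z i * β i)
    (hpos : ∀ i, 0 < radial f (z i) (xt (i + 1))) (y : EuclideanSpace ℝ (Fin n)) :
    ⨅ i, (z i : EReal) ≤ f y := by
  have hz0 := hrsm.level_zero_neg hf.neg_at_zero
  by_contra! hy
  obtain ⟨q, hyq, hqz⟩ := EReal.lt_iff_exists_real_btwn.1 hy
  obtain ⟨w, hyw, hwq⟩ := EReal.lt_iff_exists_real_btwn.1 hyq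
  have hwq : w < q := by exact_mod_cast hwq
  have hzq : ∀ i, q ≤ z i := fun i => by exact_mod_cast (hqz.trans_le (iInf_le _ i)).le
  have hq : q < 0 := (hzq 0).trans_lt hz0
  have hw : w < 0 := hwq.trans hq
  obtain ⟨ρ, hρ, hball⟩ : ∃ ρ > 0, ∀ u ∈ Metric.closedBall 0 ρ, f u < (z 0 / 2 : ℝ) :=
    Metric.nhds_basis_closedBall.eventually_iff.1 <|
      eventually_lt_of_convex_epigraph hf.proper hf.convexEpi hf.zero_mem
        (by rw [hrsm.init_z]; exact_mod_cast (by linarith : z 0 < z 0 / 2))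
  have hζ (i : ℕ) : ‖ζ i‖ ≤ ρ⁻¹ :=
    hrsm.norm_subgrad_le hf.lsc hz0 hpos hρ (by linarith)
      (fun u hu => (hball u (mem_closedBall_zero_iff.2 hu)).le) i (hzq i)
  refine not_tendsto_sum_range_of_le_sub_add (Q := fun i => ‖(z i)⁻¹ • x i - w⁻¹ • y‖ ^ 2)
    (ε := 2 * (w⁻¹ - q⁻¹)) (b := fun i => ρ⁻¹ ^ 2 * β i ^ 2)
    (by linarith [(inv_lt_inv_of_neg hq hw).2 hwq]) (fun i => sq_nonneg _) (hβsq.mul_left _)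
    (fun i => ?_) hβdiv
  have hzi : (z i)⁻¹ ≤ q⁻¹ := (inv_le_inv_of_neg (hrsm.level_neg hz0 hpos i) hq).2 (hzq i)
  have hζsq : ‖ζ i‖ ^ 2 ≤ ρ⁻¹ ^ 2 := pow_le_pow_left₀ (norm_nonneg _) (hζ i) 2
  have := hrsm.norm_inv_smul_sub_sq_succ_le hz0 hpos hα hw hyw.le i (hβpos i).le
  nlinarith [hβpos i, sq_nonneg (β i)]

end RSM

/-- **Corollary 1.2.** With step sizes `α i = -z i · β i` for a positive sequence `β` with
`∑ β i = ∞` and `∑ β i² < ∞`, if the algorithm never encounters `γ_{z i}(x̃_{i+1}) = 0`,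
then `lim_{k→∞} min_{i ≤ k} f(x i) = f* = inf f`. -/
theorem radial_subgradient_square_summable_convergence {n : ℕ}
    (f : EuclideanSpace ℝ (Fin n) → EReal) (hf : GoodFun f)
    (β : ℕ → ℝ) (hβpos : ∀ i, 0 < β i)
    (hβdiv : Tendsto (fun k => ∑ i ∈ Finset.range k, β i) atTop atTop)
    (hβsq : Summable (fun i => β i ^ 2))
    (α : ℕ → ℝ) (x xt : ℕ → EuclideanSpace ℝ (Fin n)) (z : ℕ → ℝ)
    (ζ : ℕ → EuclideanSpace ℝ (Fin n)) (hrsm : RSM f α x xt z ζ)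
    (hα : ∀ i, α i = -z i * β i)
    (hpos : ∀ i, 0 < radial f (z i) (xt (i + 1))) :
    Tendsto
      (fun k => (Finset.range (k + 1)).inf' Finset.nonempty_range_add_one (fun i => f (x i)))
      atTop (nhds (⨅ y, f y)) := by
  have hz0 := hrsm.level_zero_neg hf.neg_at_zero
  have hinf : ⨅ i, f (x i) = ⨅ y, f y := by
    refine le_antisymm (le_iInf fun y => ?_) (le_iInf fun i => iInf_le _ (x i))
    exact (iInf_mono (hrsm.apply_le_level hf.lsc hz0 hpos)).trans
      (hrsm.iInf_level_le hf hβpos hβdiv hβsq hα hpos y)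
  rw [← hinf]
  exact tendsto_inf'_range_succ_atTop _
end

section
/- For every z ∈ ℝ, the radial reformulation γ_z : ℝⁿ → ℝ of level z is a convex function and is Lipschitz continuous with Lipschitz constant 1/R, where the constant 1/R does not depend on the level z. -/
/-!
The scales `γ > 0` with `f^p(x, γ) ≤ z` are a slice of the epigraph of the perspective, which is
jointly convex and positively homogeneous, hence subadditive. Taking infima gives
`γ_{z₁+z₂}(x + y) ≤ γ_{z₁}(x) + γ_{z₂}(y)` and `γ_{az}(ax) = a γ_z(x)` for `a > 0`, which together
give convexity. For the Lipschitz bound take `z₂ = 0`: since `f ≤ 0` on the open ball of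
radius `R`, every `t > ‖w‖/R` is feasible for `γ_0(w)`, so `γ_z(x) ≤ γ_z(y) + ‖x - y‖/R`.
-/

open Filter

open Topology Metric Set
open scoped Pointwise

theorem nonpos_of_norm_lt_of_isLUB {E : Type*} [SeminormedAddCommGroup E] {f : E → EReal}
    {R : ℝ} (hR : IsLUB {r : ℝ | ∀ x, ‖x‖ ≤ r → f x ≤ 0} R) {w : E} (hw : ‖w‖ < R) :
    f w ≤ 0 := by
  obtain ⟨r, hr, hwr, -⟩ := hR.exists_between hw
  exact hr w hwr.le

section

variable {n : ℕ} {f : EuclideanSpace ℝ (Fin n) → EReal}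

namespace GoodFun

theorem apply_smul_add_smul_le (hf : GoodFun f) {u v : EuclideanSpace ℝ (Fin n)}
    {p q a b : ℝ} (hu : f u ≤ p) (hv : f v ≤ q) (ha : 0 ≤ a) (hb : 0 ≤ b) (hab : a + b = 1) :
    f (a • u + b • v) ≤ ((a * p + b * q : ℝ) : EReal) := by
  simpa using hf.convexEpi (x := (u, p)) (y := (v, q)) hu hv ha hb hab

theorem convexOn_toReal (hf : GoodFun f) :
    ConvexOn ℝ {x | f x ≠ ⊤} (fun x => (f x).toReal) := by
  have hfin {x} (hx : f x ≠ ⊤) : f x = ((f x).toReal : EReal) :=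
    (EReal.coe_toReal hx (hf.proper x)).symm
  refine ⟨fun x hx y hy a b ha hb hab => ?_, fun x hx y hy a b ha hb hab => ?_⟩
  · exact ne_top_of_le_ne_top (EReal.coe_ne_top _)
      (hf.apply_smul_add_smul_le (hfin hx).le (hfin hy).le ha hb hab)
  · exact EReal.toReal_le_toReal (hf.apply_smul_add_smul_le (hfin hx).le (hfin hy).le ha hb hab)
      (hf.proper _) (EReal.coe_ne_top _)

-- A convex function is continuous on the interior of its domain.
theorem exists_neg_le_on_closedBall (hf : GoodFun f) :
    ∃ c < (0 : ℝ), ∃ ρ > 0, ∀ x ∈ closedBall 0 ρ, f x ≤ c := by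
  set g := fun x => (f x).toReal
  have hdom : {x | f x ≠ ⊤} ∈ 𝓝 0 := mem_interior_iff_mem_nhds.mp hf.zero_mem
  have hg0 : g 0 < 0 := by
    have h0 : f 0 = ((g 0 : ℝ) : EReal) :=
      (EReal.coe_toReal hf.neg_at_zero.ne_top (hf.proper 0)).symm
    exact_mod_cast h0 ▸ hf.neg_at_zero
  have hcont : ContinuousAt g 0 :=
    hf.convexOn_toReal.continuousOn_interior.continuousAt
      (isOpen_interior.mem_nhds hf.zero_mem)
  have hev : ∀ᶠ x in 𝓝 0, f x ≤ ((g 0 / 2 : ℝ) : EReal) := by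
    filter_upwards [hcont.eventually_lt_const (by linarith : g 0 < g 0 / 2), hdom] with x hx hxdom
    rw [← EReal.coe_toReal hxdom (hf.proper x)]
    exact_mod_cast hx.le
  exact ⟨g 0 / 2, by linarith, nhds_basis_closedBall.eventually_iff.mp hev⟩

theorem pos_of_isLUB (hf : GoodFun f) {R : ℝ}
    (hR : IsLUB {r : ℝ | ∀ x, ‖x‖ ≤ r → f x ≤ 0} R) : 0 < R := by
  obtain ⟨c, hc, ρ, hρ, hball⟩ := hf.exists_neg_le_on_closedBall
  refine hρ.trans_le (hR.1 fun x hx => (hball x ?_).trans (by exact_mod_cast hc.le))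
  rwa [mem_closedBall_zero_iff]

end GoodFun

theorem perspective_le_coe_iff (x : EuclideanSpace ℝ (Fin n)) {γ : ℝ} (hγ : 0 < γ) (z : ℝ) :
    perspective f x γ ≤ z ↔ f (γ⁻¹ • x) ≤ ((z / γ : ℝ) : EReal) := by
  unfold perspective
  induction f (γ⁻¹ • x) using EReal.rec with
  | bot => simp [EReal.coe_mul_bot_of_pos hγ]
  | coe r =>
    rw [← EReal.coe_mul, EReal.coe_le_coe_iff, EReal.coe_le_coe_iff, le_div_iff₀ hγ, mul_comm]
  | top => simp [EReal.mul_top_of_pos (EReal.coe_pos.mpr hγ)]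

def feasibleScales (f : EuclideanSpace ℝ (Fin n) → EReal) (z : ℝ)
    (x : EuclideanSpace ℝ (Fin n)) : Set ℝ :=
  {γ : ℝ | 0 < γ ∧ perspective f x γ ≤ (z : EReal)}

theorem radial_eq_sInf_feasibleScales (z : ℝ) (x : EuclideanSpace ℝ (Fin n)) :
    radial f z x = sInf (feasibleScales f z x) := rfl

theorem feasibleScales_bddBelow (z : ℝ) (x : EuclideanSpace ℝ (Fin n)) :
    BddBelow (feasibleScales f z x) :=
  ⟨0, fun _ hγ => hγ.1.le⟩

theorem GoodFun.feasibleScales_nonempty (hf : GoodFun f) (z : ℝ) (x : EuclideanSpace ℝ (Fin n)) :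
    (feasibleScales f z x).Nonempty := by
  obtain ⟨c, hc, ρ, hρ, hball⟩ := hf.exists_neg_le_on_closedBall
  set γ := max (max (‖x‖ / ρ) (z / c)) 1
  have hγ : 0 < γ := one_pos.trans_le (le_max_right _ _)
  have hxγ : ‖x‖ / ρ ≤ γ := (le_max_left _ _).trans (le_max_left _ _)
  have hzγ : z / c ≤ γ := (le_max_right _ _).trans (le_max_left _ _)
  refine ⟨γ, hγ, (perspective_le_coe_iff x hγ z).mpr ((hball _ ?_).trans ?_)⟩
  · rw [mem_closedBall_zero_iff, norm_smul, norm_inv, Real.norm_of_nonneg hγ.le,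
      inv_mul_le_iff₀ hγ]
    rwa [div_le_iff₀ hρ] at hxγ
  · rw [EReal.coe_le_coe_iff, le_div_iff₀ hγ]
    rwa [div_le_iff_of_neg hc, mul_comm] at hzγ

/-- The perspective of a convex function is subadditive. -/
theorem GoodFun.add_subset_feasibleScales (hf : GoodFun f) (z₁ z₂ : ℝ)
    (x y : EuclideanSpace ℝ (Fin n)) :
    feasibleScales f z₁ x + feasibleScales f z₂ y ⊆ feasibleScales f (z₁ + z₂) (x + y) := by
  rintro _ ⟨γ₁, ⟨hγ₁, h₁⟩, γ₂, ⟨hγ₂, h₂⟩, rfl⟩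
  have hγ : 0 < γ₁ + γ₂ := add_pos hγ₁ hγ₂
  refine ⟨hγ, (perspective_le_coe_iff _ hγ _).mpr ?_⟩
  have hcomb := hf.apply_smul_add_smul_le ((perspective_le_coe_iff x hγ₁ z₁).mp h₁)
    ((perspective_le_coe_iff y hγ₂ z₂).mp h₂) (div_nonneg hγ₁.le hγ.le)
    (div_nonneg hγ₂.le hγ.le) (by field_simp)
  have hvec : (γ₁ / (γ₁ + γ₂)) • (γ₁⁻¹ • x) + (γ₂ / (γ₁ + γ₂)) • (γ₂⁻¹ • y)
      = (γ₁ + γ₂)⁻¹ • (x + y) := by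
    rw [smul_smul, smul_smul, smul_add]
    congr 2 <;> field_simp
  have hval : γ₁ / (γ₁ + γ₂) * (z₁ / γ₁) + γ₂ / (γ₁ + γ₂) * (z₂ / γ₂)
      = (z₁ + z₂) / (γ₁ + γ₂) := by
    field_simp
  rwa [hvec, hval] at hcomb

theorem feasibleScales_smul {a : ℝ} (ha : 0 < a) (z : ℝ) (x : EuclideanSpace ℝ (Fin n)) :
    feasibleScales f (a * z) (a • x) = a • feasibleScales f z x := by
  ext γ
  rw [mem_smul_set_iff_inv_smul_mem₀ ha.ne', smul_eq_mul]
  change (0 < γ ∧ _) ↔ (0 < a⁻¹ * γ ∧ _)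
  rw [mul_pos_iff_of_pos_left (inv_pos.mpr ha)]
  refine and_congr_right fun hγ => ?_
  rw [perspective_le_coe_iff _ hγ, perspective_le_coe_iff _ (by positivity), smul_smul]
  have hscale : γ⁻¹ * a = (a⁻¹ * γ)⁻¹ := by field_simp
  have hlevel : a * z / γ = z / (a⁻¹ * γ) := by field_simp
  rw [hscale, hlevel]

theorem radial_smul {a : ℝ} (ha : 0 < a) (z : ℝ) (x : EuclideanSpace ℝ (Fin n)) :
    radial f (a * z) (a • x) = a * radial f z x := by
  rw [radial_eq_sInf_feasibleScales, feasibleScales_smul ha, Real.sInf_smul_of_nonneg ha.le]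
  rfl

theorem GoodFun.radial_add_le (hf : GoodFun f) (z₁ z₂ : ℝ) (x y : EuclideanSpace ℝ (Fin n)) :
    radial f (z₁ + z₂) (x + y) ≤ radial f z₁ x + radial f z₂ y := by
  rw [radial_eq_sInf_feasibleScales, radial_eq_sInf_feasibleScales,
    radial_eq_sInf_feasibleScales, ← csInf_add (hf.feasibleScales_nonempty z₁ x)
      (feasibleScales_bddBelow z₁ x) (hf.feasibleScales_nonempty z₂ y)
      (feasibleScales_bddBelow z₂ y)]
  exact csInf_le_csInf (feasibleScales_bddBelow _ _)
    ((hf.feasibleScales_nonempty z₁ x).add (hf.feasibleScales_nonempty z₂ y))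
    (hf.add_subset_feasibleScales z₁ z₂ x y)

theorem GoodFun.convexOn_radial (hf : GoodFun f) (z : ℝ) : ConvexOn ℝ univ (radial f z) := by
  refine convexOn_iff_forall_pos.mpr ⟨convex_univ, fun x _ y _ a b ha hb hab => ?_⟩
  calc radial f z (a • x + b • y) = radial f (a * z + b * z) (a • x + b • y) := by
        rw [← add_mul, hab, one_mul]
    _ ≤ radial f (a * z) (a • x) + radial f (b * z) (b • y) := hf.radial_add_le _ _ _ _
    _ = a • radial f z x + b • radial f z y := by rw [radial_smul ha, radial_smul hb]; rfl

theorem radial_zero_le_norm_div {R : ℝ} (hR : 0 < R)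
    (hball : ∀ w : EuclideanSpace ℝ (Fin n), ‖w‖ < R → f w ≤ 0) (w : EuclideanSpace ℝ (Fin n)) :
    radial f 0 w ≤ ‖w‖ / R := by
  refine le_of_forall_gt_imp_ge_of_dense fun t ht => csInf_le (feasibleScales_bddBelow 0 w) ?_
  have ht0 : 0 < t := (div_nonneg (norm_nonneg w) hR.le).trans_lt ht
  refine ⟨ht0, (perspective_le_coe_iff w ht0 0).mpr ?_⟩
  rw [zero_div]
  refine hball _ ?_
  rw [norm_smul, norm_inv, Real.norm_of_nonneg ht0.le, inv_mul_lt_iff₀ ht0]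
  rwa [div_lt_iff₀ hR] at ht

theorem GoodFun.radial_sub_radial_le (hf : GoodFun f) {R : ℝ} (hR : 0 < R)
    (hball : ∀ w : EuclideanSpace ℝ (Fin n), ‖w‖ < R → f w ≤ 0) (z : ℝ)
    (x y : EuclideanSpace ℝ (Fin n)) :
    radial f z x - radial f z y ≤ ‖x - y‖ / R := by
  rw [sub_le_iff_le_add']
  calc radial f z x = radial f (z + 0) (y + (x - y)) := by rw [add_zero, add_sub_cancel]
    _ ≤ radial f z y + radial f 0 (x - y) := hf.radial_add_le _ _ _ _
    _ ≤ radial f z y + ‖x - y‖ / R := by grw [radial_zero_le_norm_div hR hball]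

end

/-- **Proposition 2.2.** For every `z`, the radial reformulation `γ_z` is convex and
Lipschitz continuous with constant `1/R` (independent of the level `z`), where
`R = sup { r | f(x) ≤ 0 for all x with ‖x‖ ≤ r }`. -/
theorem radial_convex_and_lipschitz {n : ℕ}
    (f : EuclideanSpace ℝ (Fin n) → EReal) (hf : GoodFun f)
    (R : ℝ) (hR : IsLUB {r : ℝ | ∀ x, ‖x‖ ≤ r → f x ≤ 0} R) :
    ∀ z : ℝ, ConvexOn ℝ Set.univ (radial f z) ∧
      ∀ x y : EuclideanSpace ℝ (Fin n),
        |radial f z x - radial f z y| ≤ (1 / R) * ‖x - y‖ := by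
  intro z
  have hRpos := hf.pos_of_isLUB hR
  have hball (w : EuclideanSpace ℝ (Fin n)) : ‖w‖ < R → f w ≤ 0 :=
    nonpos_of_norm_lt_of_isLUB hR
  refine ⟨hf.convexOn_radial z, fun x y => ?_⟩
  rw [one_div_mul_eq_div, abs_sub_le_iff]
  exact ⟨hf.radial_sub_radial_le hRpos hball z x y,
    norm_sub_rev x y ▸ hf.radial_sub_radial_le hRpos hball z y x⟩
end
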